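/- Assume b₀'(0) ≠ 0, let ε > 0 and let d : (−ε, ε) → ℝ be a smooth function with d(0) = 0 satisfying b₀(d(y)) + b₁(d(y))·y² + ½(b₃(d(y), y) + b₃(d(y), −y))·y⁴ = 0 for all |y| < ε. Define the image of the double point curve d̂(y) = φ(d(y), y). Then d̂'(0) = d̂'''(0) = (0,0,0), d̂''(0) = (−2b₁(0)/b₀'(0), 1, 0), and d̂⁽⁴⁾(0) = ( 12(−2b₃(0,0)b₀'(0)² + 2b₀'(0)b₁'(0)b₁(0) − b₁(0)²b₀''(0))/b₀'(0)³ , 12b₁(0)²a''(0)/b₀'(0)² , 0 ). -/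

import Mathlib

/-!
Differentiating the double point equation `b₀(d y) + b₁(d y) y² + c(y) y⁴ = 0`, where `c` is the
even part of `y ↦ b₃(d y, y)`, four times at `0` and using `b₀'(0) ≠ 0` gives in turn `d'(0) = 0`,
`d''(0)`, `d'''(0) = 0` and `d⁗(0)`. As `0` is a critical point of both `d` and `a`, the second
coordinate `a(d y) + y²/2` has the jet `(0, 1, 0, 3 a''(0) d''(0)²)`. By the same equation the
bracket in the third coordinate is `y³ (b₂(d y) + y · (odd part of b₃(d y, ·)))`, so the third
coordinate vanishes to order six.
-/

open Real Set

/-- Cross product of two vectors in ℝ³. -/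
noncomputable def cross3 (a b : Fin 3 → ℝ) : Fin 3 → ℝ :=
  ![a 1 * b 2 - a 2 * b 1, a 2 * b 0 - a 0 * b 2, a 0 * b 1 - a 1 * b 0]

/-- Determinant of three vectors in ℝ³. -/
noncomputable def det3 (a b c : Fin 3 → ℝ) : ℝ :=
  Matrix.det (Matrix.of ![a, b, c])

/-- Euclidean norm on ℝ³. -/
noncomputable def norm3 (a : Fin 3 → ℝ) : ℝ :=
  Real.sqrt (a 0 ^ 2 + a 1 ^ 2 + a 2 ^ 2)

/-- Euclidean inner product on ℝ³. -/
noncomputable def dot3 (a b : Fin 3 → ℝ) : ℝ :=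
  a 0 * b 0 + a 1 * b 1 + a 2 * b 2

open Filter Topology
open scoped ContDiff

section IteratedDeriv

variable {𝕜 : Type*} [NontriviallyNormedField 𝕜]

theorem iteratedDeriv_apply {ι F : Type*} [Fintype ι] [NormedAddCommGroup F] [NormedSpace 𝕜 F]
    {f : 𝕜 → ι → F} {x : 𝕜} {n : ℕ} (hf : ContDiffAt 𝕜 n f x) (j : ι) :
    iteratedDeriv n f x j = iteratedDeriv n (fun y => f y j) x := by
  have := (ContinuousLinearMap.proj (R := 𝕜) (φ := fun _ : ι => F) j).iteratedFDeriv_comp_left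
    hf le_rfl
  simp only [iteratedDeriv_eq_iteratedFDeriv]
  exact (congrArg (fun L => L fun _ => (1 : 𝕜)) this).symm

theorem iteratedDeriv_vec3 {f g h : 𝕜 → 𝕜} {x : 𝕜} {n : ℕ} (hf : ContDiffAt 𝕜 n f x)
    (hg : ContDiffAt 𝕜 n g x) (hh : ContDiffAt 𝕜 n h x) :
    iteratedDeriv n (fun y => ![f y, g y, h y]) x =
      ![iteratedDeriv n f x, iteratedDeriv n g x, iteratedDeriv n h x] := by
  have hv : ContDiffAt 𝕜 n (fun y => ![f y, g y, h y]) x :=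
    contDiffAt_pi.2 fun j => by fin_cases j <;> assumption
  funext j
  rw [iteratedDeriv_apply hv]
  fin_cases j <;> rfl

theorem iteratedDeriv_mul_pow_zero {f : 𝕜 → 𝕜} {n : ℕ} (hf : ContDiffAt 𝕜 n f 0) (m : ℕ) :
    iteratedDeriv n (fun y => f y * y ^ m) 0 = n.descFactorial m * iteratedDeriv (n - m) f 0 := by
  rw [iteratedDeriv_fun_mul hf (g := fun y => y ^ m) (by fun_prop)]
  simp only [iteratedDeriv_fun_pow_zero]
  rcases le_or_gt m n with hmn | hnm
  · rw [Finset.sum_eq_single (n - m)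
      (fun i hi hne => by simp [show n - i ≠ m by rw [Finset.mem_range] at hi; omega]) (by simp)]
    simp [Nat.sub_sub_self hmn, Nat.choose_symm hmn, Nat.descFactorial_eq_factorial_mul_choose]
    ring
  · simp [show ∀ i, n - i ≠ m by omega, Nat.descFactorial_eq_zero_iff_lt.2 hnm]

theorem iteratedDeriv_eq_zero_of_eventuallyEq_mul_pow {f g : 𝕜 → 𝕜} {n m : ℕ}
    (hg : ContDiffAt 𝕜 n g 0) (hfg : ∀ᶠ y in 𝓝 0, f y = g y * y ^ m) (hnm : n < m) :
    iteratedDeriv n f 0 = 0 := by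
  rw [EventuallyEq.iteratedDeriv_eq n hfg, iteratedDeriv_mul_pow_zero hg,
    Nat.descFactorial_eq_zero_iff_lt.2 hnm, Nat.cast_zero, zero_mul]

theorem iteratedDeriv_add_mul_sq_add_mul_pow_four {u v w : 𝕜 → 𝕜} {n : ℕ}
    (hu : ContDiffAt 𝕜 n u 0) (hv : ContDiffAt 𝕜 n v 0) (hw : ContDiffAt 𝕜 n w 0)
    (h : ∀ᶠ y in 𝓝 0, u y + v y * y ^ 2 + w y * y ^ 4 = 0) :
    iteratedDeriv n u 0 + n.descFactorial 2 * iteratedDeriv (n - 2) v 0 +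
      n.descFactorial 4 * iteratedDeriv (n - 4) w 0 = 0 := by
  rw [← iteratedDeriv_mul_pow_zero hv, ← iteratedDeriv_mul_pow_zero hw,
    ← iteratedDeriv_fun_add hu (hv.mul (by fun_prop)),
    ← iteratedDeriv_fun_add (hu.add (hv.mul (by fun_prop))) (hw.mul (by fun_prop)),
    EventuallyEq.iteratedDeriv_eq n (g := fun _ => 0) h, iteratedDeriv_fun_const_zero]

theorem iteratedDeriv_add_sq_div_two [CharZero 𝕜] {f : 𝕜 → 𝕜} {n : ℕ} (hf : ContDiffAt 𝕜 n f 0) :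
    iteratedDeriv n (fun y => f y + y ^ 2 / 2) 0 =
      iteratedDeriv n f 0 + if n = 2 then 1 else 0 := by
  rw [iteratedDeriv_fun_add hf (g := fun y => y ^ 2 / 2) (by fun_prop), iteratedDeriv_div_const,
    iteratedDeriv_fun_pow_zero]
  split_ifs <;> simp

theorem iteratedDeriv_comp_four {g f : 𝕜 → 𝕜} {x : 𝕜} (hg : ContDiffAt 𝕜 4 g (f x))
    (hf : ContDiffAt 𝕜 4 f x) :
    iteratedDeriv 4 (g ∘ f) x =
      iteratedDeriv 4 g (f x) * deriv f x ^ 4 +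
      6 * iteratedDeriv 3 g (f x) * iteratedDeriv 2 f x * deriv f x ^ 2 +
      3 * iteratedDeriv 2 g (f x) * iteratedDeriv 2 f x ^ 2 +
      4 * iteratedDeriv 2 g (f x) * iteratedDeriv 3 f x * deriv f x +
      deriv g (f x) * iteratedDeriv 4 f x := by
  have hf₃ : ContDiffAt 𝕜 3 f x := hf.of_le (by norm_num)
  have hg' : ContDiffAt 𝕜 3 (deriv g) (f x) := hg.derivWithin (by norm_num)
  have hderiv : deriv (g ∘ f) =ᶠ[𝓝 x] (deriv g ∘ f) * deriv f := by
    filter_upwards [hf.continuousAt.eventually (hg.eventually (by simp)), hf.eventually (by simp)]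
      with y hgy hfy
    exact deriv_comp y (hgy.differentiableAt (by simp)) (hfy.differentiableAt (by simp))
  have hg₂ : deriv (deriv g) = iteratedDeriv 2 g := by rw [iteratedDeriv_succ, iteratedDeriv_one]
  have hchain : deriv (deriv g ∘ f) x = iteratedDeriv 2 g (f x) * deriv f x := by
    rw [deriv_comp x (hg'.differentiableAt (by simp)) (hf.differentiableAt (by simp)), hg₂]
  -- Leibniz's rule for `(g' ∘ f) * f'`, with the third-order chain rule for `g' ∘ f`.
  rw [iteratedDeriv_succ', hderiv.iteratedDeriv_eq,
    iteratedDeriv_mul (hg'.comp x hf₃) (hf.derivWithin (by norm_num))]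
  simp only [Finset.sum_range_succ, Finset.sum_range_zero, iteratedDeriv_zero, iteratedDeriv_one,
    hchain, hg₂, iteratedDeriv_comp_two (hg'.of_le (by norm_num)) (hf₃.of_le (by norm_num)),
    iteratedDeriv_comp_three hg' hf₃, ← iteratedDeriv_succ']
  norm_num
  ring

theorem iteratedDeriv_comp_of_deriv_eq_zero {g f : 𝕜 → 𝕜} {x : 𝕜} (hg : ContDiffAt 𝕜 4 g (f x))
    (hf : ContDiffAt 𝕜 4 f x) (hg' : deriv g (f x) = 0) (hf' : deriv f x = 0) :
    deriv (g ∘ f) x = 0 ∧ iteratedDeriv 2 (g ∘ f) x = 0 ∧ iteratedDeriv 3 (g ∘ f) x = 0 ∧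
      iteratedDeriv 4 (g ∘ f) x = 3 * iteratedDeriv 2 g (f x) * iteratedDeriv 2 f x ^ 2 := by
  refine ⟨?_, ?_, ?_, ?_⟩
  · rw [deriv_comp x (hg.differentiableAt (by simp)) (hf.differentiableAt (by simp)), hf', mul_zero]
  · rw [iteratedDeriv_comp_two (hg.of_le (by norm_num)) (hf.of_le (by norm_num)), hf', hg']
    ring
  · rw [iteratedDeriv_comp_three (hg.of_le (by norm_num)) (hf.of_le (by norm_num)), hf', hg']
    ring
  · rw [iteratedDeriv_comp_four hg hf, hf', hg']
    ring

theorem jet_of_implicit_eq_zero {b₀ b₁ c d : 𝕜 → 𝕜} (hb₀ : ContDiffAt 𝕜 4 b₀ 0)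
    (hb₁ : ContDiffAt 𝕜 4 b₁ 0) (hc : ContDiffAt 𝕜 4 c 0) (hd : ContDiffAt 𝕜 4 d 0)
    (hd0 : d 0 = 0) (hb₀' : deriv b₀ 0 ≠ 0)
    (h : ∀ᶠ y in 𝓝 0, b₀ (d y) + b₁ (d y) * y ^ 2 + c y * y ^ 4 = 0) :
    deriv d 0 = 0 ∧ iteratedDeriv 2 d 0 = -2 * b₁ 0 / deriv b₀ 0 ∧ iteratedDeriv 3 d 0 = 0 ∧
      iteratedDeriv 4 d 0 = 12 * (-2 * c 0 * deriv b₀ 0 ^ 2 +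
        2 * deriv b₀ 0 * deriv b₁ 0 * b₁ 0 - b₁ 0 ^ 2 * iteratedDeriv 2 b₀ 0) / deriv b₀ 0 ^ 3 := by
  rw [← hd0] at hb₀ hb₁
  have hd₂ : ContDiffAt 𝕜 2 d 0 := hd.of_le (by norm_num)
  have hd₃ : ContDiffAt 𝕜 3 d 0 := hd.of_le (by norm_num)
  have E (n : ℕ) (hn : n ≤ 4) := iteratedDeriv_add_mul_sq_add_mul_pow_four
    ((hb₀.comp 0 hd).of_le (by exact_mod_cast hn)) ((hb₁.comp 0 hd).of_le (by exact_mod_cast hn))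
    (hc.of_le (by exact_mod_cast hn)) h
  have E₁ := E 1 (by norm_num)
  have E₂ := E 2 (by norm_num)
  have E₃ := E 3 (by norm_num)
  have E₄ := E 4 le_rfl
  norm_num [Nat.descFactorial, hd0,
    deriv_comp 0 (hb₀.differentiableAt (by simp)) (hd.differentiableAt (by simp)),
    deriv_comp 0 (hb₁.differentiableAt (by simp)) (hd.differentiableAt (by simp)),
    iteratedDeriv_comp_two (hb₀.of_le (by norm_num)) hd₂,
    iteratedDeriv_comp_two (hb₁.of_le (by norm_num)) hd₂,
    iteratedDeriv_comp_three (hb₀.of_le (by norm_num)) hd₃, iteratedDeriv_comp_four hb₀ hd]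
    at E₁ E₂ E₃ E₄
  have d₁ : deriv d 0 = 0 := E₁.resolve_left hb₀'
  rw [d₁] at E₂ E₃ E₄
  refine ⟨d₁, by rw [eq_div_iff hb₀']; linear_combination E₂, ?_, ?_⟩
  · exact (mul_eq_zero.1 (by linear_combination E₃)).resolve_left hb₀'
  · rw [eq_div_iff (pow_ne_zero 3 hb₀')]
    linear_combination deriv b₀ 0 ^ 2 * E₄ - (3 * iteratedDeriv 2 b₀ 0 *
      (deriv b₀ 0 * iteratedDeriv 2 d 0 - 2 * b₁ 0) + 12 * deriv b₁ 0 * deriv b₀ 0) * E₂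

theorem iteratedDeriv_sq_eq_zero_of_even_part_eq_zero [CharZero 𝕜] {u₀ u₁ u₂ p q : 𝕜 → 𝕜}
    {n : ℕ} (hu₂ : ContDiffAt 𝕜 n u₂ 0) (hp : ContDiffAt 𝕜 n p 0) (hq : ContDiffAt 𝕜 n q 0)
    (h : ∀ᶠ y in 𝓝 0, u₀ y + u₁ y * y ^ 2 + 1 / 2 * (p y + q y) * y ^ 4 = 0) (hn : n < 6) :
    iteratedDeriv n (fun y => (u₀ y + u₁ y * y ^ 2 + u₂ y * y ^ 3 + p y * y ^ 4) ^ 2) 0 = 0 := by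
  refine iteratedDeriv_eq_zero_of_eventuallyEq_mul_pow (m := 6)
    (g := fun y => (u₂ y + (p y - q y) / 2 * y) ^ 2) (by fun_prop) ?_ hn
  filter_upwards [h] with y hy
  linear_combination (u₀ y + u₁ y * y ^ 2 + u₂ y * y ^ 3 + p y * y ^ 4 +
    y ^ 3 * (u₂ y + (p y - q y) / 2 * y)) * hy

end IteratedDeriv

theorem stmt11_general (a b₀ b₁ b₂ : ℝ → ℝ) (b₃ : ℝ → ℝ → ℝ)
    (ha : ContDiff ℝ (⊤ : ℕ∞) a) (hb₀ : ContDiff ℝ (⊤ : ℕ∞) b₀)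
    (hb₁ : ContDiff ℝ (⊤ : ℕ∞) b₁) (hb₂ : ContDiff ℝ (⊤ : ℕ∞) b₂)
    (hb₃ : ContDiff ℝ (⊤ : ℕ∞) (Function.uncurry b₃))
    (ha0' : deriv a 0 = 0) (hb₀0' : deriv b₀ 0 ≠ 0)
    (ε : ℝ) (hε : 0 < ε) (d : ℝ → ℝ)
    (hd : ContDiffOn ℝ (⊤ : ℕ∞) d (Set.Ioo (-ε) ε)) (hd0 : d 0 = 0)
    (hdeq : ∀ y ∈ Set.Ioo (-ε) ε,
      b₀ (d y) + b₁ (d y) * y ^ 2 +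
        (1 / 2) * (b₃ (d y) y + b₃ (d y) (-y)) * y ^ 4 = 0)
    (φ : ℝ → ℝ → Fin 3 → ℝ)
    (hφ : ∀ x y, φ x y =
      ![x, a x + y ^ 2 / 2,
        (b₀ x + b₁ x * y ^ 2 + b₂ x * y ^ 3 + b₃ x y * y ^ 4) ^ 2])
    (dh : ℝ → Fin 3 → ℝ) (hdh : ∀ y, dh y = φ (d y) y) :
    deriv dh 0 = 0 ∧
    iteratedDeriv 3 dh 0 = 0 ∧
    iteratedDeriv 2 dh 0 = ![-2 * b₁ 0 / deriv b₀ 0, 1, 0] ∧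
    iteratedDeriv 4 dh 0 =
      ![12 * (-2 * b₃ 0 0 * deriv b₀ 0 ^ 2 + 2 * deriv b₀ 0 * deriv b₁ 0 * b₁ 0 -
            b₁ 0 ^ 2 * iteratedDeriv 2 b₀ 0) / deriv b₀ 0 ^ 3,
        12 * b₁ 0 ^ 2 * iteratedDeriv 2 a 0 / deriv b₀ 0 ^ 2, 0] := by
  have hI : Ioo (-ε) ε ∈ 𝓝 0 := Ioo_mem_nhds (by linarith) hε
  have hd' : ContDiffAt ℝ ∞ d 0 := hd.contDiffAt hI
  have hb₃y : ContDiffAt ℝ ∞ (fun y => b₃ (d y) y) 0 :=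
    hb₃.contDiffAt.comp 0 (hd'.prodMk contDiffAt_id)
  have hb₃ny : ContDiffAt ℝ ∞ (fun y => b₃ (d y) (-y)) 0 :=
    hb₃.contDiffAt.comp 0 (hd'.prodMk contDiffAt_id.neg)
  have hdeq' := eventually_of_mem hI hdeq
  obtain ⟨d₁, d₂, d₃, d₄⟩ := jet_of_implicit_eq_zero (contDiffAt_infty.1 hb₀.contDiffAt 4)
    (contDiffAt_infty.1 hb₁.contDiffAt 4) (contDiffAt_infty.1 (by fun_prop) 4)
    (contDiffAt_infty.1 hd' 4) hd0 hb₀0' hdeq'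
  obtain ⟨a₁, a₂, a₃, a₄⟩ := iteratedDeriv_comp_of_deriv_eq_zero (g := a)
    (by rw [hd0]; exact contDiffAt_infty.1 ha.contDiffAt 4) (contDiffAt_infty.1 hd' 4)
    (by rw [hd0]; exact ha0') d₁
  have hvec (n : ℕ) (hn : n < 6) : iteratedDeriv n dh 0 =
      ![iteratedDeriv n d 0, iteratedDeriv n (a ∘ d) 0 + if n = 2 then 1 else 0, 0] := by
    have hdh' : dh = fun y => ![d y, (a ∘ d) y + y ^ 2 / 2,
        (b₀ (d y) + b₁ (d y) * y ^ 2 + b₂ (d y) * y ^ 3 + b₃ (d y) y * y ^ 4) ^ 2] :=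
      funext fun y => (hdh y).trans (hφ (d y) y)
    have ha' : ContDiffAt ℝ n (a ∘ d) 0 := contDiffAt_infty.1 (ha.contDiffAt.comp 0 hd') n
    rw [hdh', iteratedDeriv_vec3 (contDiffAt_infty.1 hd' n) (ha'.add (by fun_prop))
      (contDiffAt_infty.1 (by fun_prop) n), iteratedDeriv_add_sq_div_two ha',
      iteratedDeriv_sq_eq_zero_of_even_part_eq_zero (u₂ := fun y => b₂ (d y))
        (contDiffAt_infty.1 (hb₂.contDiffAt.comp 0 hd') n) (contDiffAt_infty.1 hb₃y n)
        (contDiffAt_infty.1 hb₃ny n) hdeq' hn]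
  rw [← iteratedDeriv_one]
  refine ⟨by simp [hvec, a₁, d₁], by simp [hvec, a₃, d₃], by simp [hvec, a₂, d₂], ?_⟩
  rw [hvec 4 (by norm_num), a₄, d₂, d₄, if_neg (by norm_num), add_zero]
  simp only [hd0, neg_zero, Matrix.vecCons_inj, and_true]
  constructor <;> ring

/-- With `d` parametrising the double point curve of the folded cuspidal
edge `φ` in the source, the image `d̂(y) = φ(d(y), y)` of the double point curve
satisfies `d̂'(0) = d̂'''(0) = 0`, `d̂''(0) = (−2b₁(0)/b₀'(0), 1, 0)`, and
`d̂⁗(0) = (12(−2b₃(0,0)b₀'(0)² + 2b₀'(0)b₁'(0)b₁(0) − b₁(0)²b₀''(0))/b₀'(0)³,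
12b₁(0)²a''(0)/b₀'(0)², 0)`. -/
theorem stmt11 (a b₀ b₁ b₂ : ℝ → ℝ) (b₃ : ℝ → ℝ → ℝ)
    (ha : ContDiff ℝ (⊤ : ℕ∞) a) (hb₀ : ContDiff ℝ (⊤ : ℕ∞) b₀)
    (hb₁ : ContDiff ℝ (⊤ : ℕ∞) b₁) (hb₂ : ContDiff ℝ (⊤ : ℕ∞) b₂)
    (hb₃ : ContDiff ℝ (⊤ : ℕ∞) (Function.uncurry b₃))
    (ha0 : a 0 = 0) (ha0' : deriv a 0 = 0) (hb₀0 : b₀ 0 = 0)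
    (hb₀0' : deriv b₀ 0 ≠ 0)
    (ε : ℝ) (hε : 0 < ε) (d : ℝ → ℝ)
    (hd : ContDiffOn ℝ (⊤ : ℕ∞) d (Set.Ioo (-ε) ε)) (hd0 : d 0 = 0)
    (hdeq : ∀ y ∈ Set.Ioo (-ε) ε,
      b₀ (d y) + b₁ (d y) * y ^ 2 +
        (1 / 2) * (b₃ (d y) y + b₃ (d y) (-y)) * y ^ 4 = 0)
    (φ : ℝ → ℝ → Fin 3 → ℝ)
    (hφ : ∀ x y, φ x y =
      ![x, a x + y ^ 2 / 2,
        (b₀ x + b₁ x * y ^ 2 + b₂ x * y ^ 3 + b₃ x y * y ^ 4) ^ 2])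
    (dh : ℝ → Fin 3 → ℝ) (hdh : ∀ y, dh y = φ (d y) y) :
    deriv dh 0 = 0 ∧
    iteratedDeriv 3 dh 0 = 0 ∧
    iteratedDeriv 2 dh 0 = ![-2 * b₁ 0 / deriv b₀ 0, 1, 0] ∧
    iteratedDeriv 4 dh 0 =
      ![12 * (-2 * b₃ 0 0 * deriv b₀ 0 ^ 2 + 2 * deriv b₀ 0 * deriv b₁ 0 * b₁ 0 -
            b₁ 0 ^ 2 * iteratedDeriv 2 b₀ 0) / deriv b₀ 0 ^ 3,
        12 * b₁ 0 ^ 2 * iteratedDeriv 2 a 0 / deriv b₀ 0 ^ 2, 0] :=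
  stmt11_general a b₀ b₁ b₂ b₃ ha hb₀ hb₁ hb₂ hb₃ ha0' hb₀0' ε hε d hd hd0 hdeq φ hφ dh hdh
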